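/- If NDRK(T̄) = ∞ (equivalently ≥ ω₁), then there is a perfect set P ⊆ 2^ω such that |(B+η) ∩ (B+ν)| ≥ k for all η, ν ∈ P, where B = ⋃_{n<ω} [T_n] is the union of the branch sets of the trees T_n. -/

import Mathlib

open scoped Classical

/-- Finite binary sequences, i.e. elements of `2^{<ω}`. -/
abbrev Seq2 : Type := List (ZMod 2)

/-- Coordinatewise addition mod 2 of finite binary sequences (of the same length). -/
def seqAdd (x y : Seq2) : Seq2 := List.zipWith (· + ·) x y

/-- `T ⊆ 2^{<ω}` is a tree with no maximal nodes. -/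
def IsTreeNoMax (T : Set Seq2) : Prop :=
  (∀ s ∈ T, ∀ t : Seq2, t <+: s → t ∈ T) ∧
  (∀ s ∈ T, ∃ t ∈ T, s <+: t ∧ s ≠ t)

/-- An element of `𝐌_{T̄,k}` (`k = 2ι`): a tuple `(ℓ, u, h̄, ḡ)` as in Definition 3.3.
The functions `h_i`, `g_i` are recorded as total functions that take the default values
`0` resp. `[]` off the domain `u^⟨2⟩`. -/
structure MTK (T : ℕ → Set Seq2) (ι : ℕ) where
  len : ℕ
  u : Finset Seq2
  h : Fin ι → Seq2 → Seq2 → ℕ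
  g : Fin ι → Seq2 → Seq2 → Seq2
  len_pos : 0 < len
  mem_len : ∀ η ∈ u, η.length = len
  two_le_card : 2 ≤ u.card
  g_mem : ∀ (i : Fin ι), ∀ η ∈ u, ∀ ν ∈ u, η ≠ ν →
    g i η ν ∈ T (h i η ν) ∧ (g i η ν).length = len
  add_eq : ∀ (i : Fin ι), ∀ η ∈ u, ∀ ν ∈ u, η ≠ ν →
    seqAdd η (g i η ν) = seqAdd ν (g i ν η)
  no_rep : ∀ η ∈ u, ∀ ν ∈ u, η ≠ ν →
    Function.Injective (fun p : Fin ι × Bool => if p.2 then g p.1 η ν else g p.1 ν η)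
  h_default : ∀ i η ν, ¬ (η ∈ u ∧ ν ∈ u ∧ η ≠ ν) → h i η ν = 0
  g_default : ∀ i η ν, ¬ (η ∈ u ∧ ν ∈ u ∧ η ≠ ν) → g i η ν = []

namespace MTK

variable {T : ℕ → Set Seq2} {ι : ℕ}

/-- `m ⊑ n` : `n` extends `m`. -/
def Ext (m n : MTK T ι) : Prop :=
  m.len ≤ n.len ∧
  m.u = n.u.image (fun η => η.take m.len) ∧
  ∀ η ∈ n.u, ∀ ν ∈ n.u, η ≠ ν → η.take m.len ≠ ν.take m.len →
    ∀ i : Fin ι,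
      m.h i (η.take m.len) (ν.take m.len) = n.h i η ν ∧
      m.g i (η.take m.len) (ν.take m.len) = (n.g i η ν).take m.len

/-- `NdrkGe m α` says `ndrk(m) ≥ α`. -/
def NdrkGe (m : MTK T ι) (α : Ordinal) : Prop :=
  ∀ β : Ordinal, β < α → ∀ ν ∈ m.u, ∃ n : MTK T ι,
    m.len < n.len ∧ m.Ext n ∧ NdrkGe n β ∧
    2 ≤ (n.u.filter (fun η => ν <+: η)).card
termination_by α

end MTK


/-- The Cantor space 2^ω with coordinatewise addition mod 2. -/
abbrev Cantor : Type := ℕ → ZMod 2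

/-- The translation B + x. -/
def transl (B : Set Cantor) (x : Cantor) : Set Cantor := (fun b => b + x) '' B

/-- The set [T] of infinite branches of a tree T ⊆ 2^{<ω}. -/
def branches (T : Set Seq2) : Set Cantor :=
  {x : Cantor | ∀ ℓ : ℕ, (List.ofFn fun i : Fin ℓ => x i) ∈ T}


/-!
Unbounded rank of `m` yields, by pigeonhole over the ordinals, an extension `m ⊑ n` of
unbounded rank in which every node of `u_m` splits. Iterating gives a fusion sequence
`m₀ ⊑ m₁ ⊑ ⋯`, and the set `P` of its branches is perfect. For distinct `η, ν ∈ P` the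
sequences `g_i^{m_j}(η↾ℓ_j, ν↾ℓ_j)` cohere from the level on where `η` and `ν` separate, so
they converge to branches `G_i(η,ν)` of a single tree `T_{h_i}`, and the identities
`η + g_i(η,ν) = ν + g_i(ν,η)` pass to the limit. As addition is mod 2, the intersection
`(B+η) ∩ (B+ν)` is invariant under `x ↦ x + η + ν`, so it contains the `2ι` points
`G_i(η,ν) + η` and `G_i(ν,η) + η`, which are distinct by the no-repetition clause.
-/

open PiNat Cardinal

section InitSeg

variable {α : Type*}

def initSeg (x : ℕ → α) (ℓ : ℕ) : List α := List.ofFn fun i : Fin ℓ => x i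

@[simp] theorem length_initSeg (x : ℕ → α) (ℓ : ℕ) : (initSeg x ℓ).length = ℓ :=
  List.length_ofFn

@[simp] theorem getElem_initSeg (x : ℕ → α) {ℓ i : ℕ} (h : i < (initSeg x ℓ).length) :
    (initSeg x ℓ)[i] = x i :=
  List.getElem_ofFn ..

theorem take_initSeg (x : ℕ → α) {ℓ L : ℕ} (h : ℓ ≤ L) : (initSeg x L).take ℓ = initSeg x ℓ :=
  List.ext_getElem (by simp [h]) fun _ _ _ => by simp

theorem initSeg_eq_initSeg_iff {x y : ℕ → α} {ℓ : ℕ} :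
    initSeg x ℓ = initSeg y ℓ ↔ x ∈ cylinder y ℓ := by
  simp [List.ext_getElem_iff]

theorem initSeg_eq_of_isPrefix {x y : ℕ → α} {ℓ L : ℕ} (h : initSeg x ℓ <+: initSeg y L) :
    initSeg x ℓ = initSeg y ℓ := by
  have hℓ : ℓ ≤ L := by simpa using h.length_le
  rw [List.prefix_iff_eq_take.1 h, length_initSeg, take_initSeg y hℓ]

theorem exists_initSeg_eq_of_isPrefix {f : ℕ → List α} (hf : ∀ k, f k <+: f (k + 1))
    (hlen : ∀ i, ∃ k, i < (f k).length) :
    ∃ x : ℕ → α, ∀ k, initSeg x (f k).length = f k := by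
  choose K hK using hlen
  have hle {k k' : ℕ} (h : k ≤ k') : f k <+: f k' := by
    induction k', h using Nat.le_induction with
    | base => exact List.prefix_refl _
    | succ k' _ ih => exact ih.trans (hf k')
  refine ⟨fun i => (f (K i))[i]'(hK i), fun k => List.ext_getElem (length_initSeg _ _) fun i _ hik => ?_⟩
  rw [getElem_initSeg]
  rcases le_total (K i) k with h | h
  · exact (hle h).getElem (hK i)
  · exact ((hle h).getElem hik).symm

variable [TopologicalSpace α] [DiscreteTopology α]

theorem isClosed_setOf_initSeg_mem (ℓ : ℕ) (s : Set (List α)) :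
    IsClosed {x : ℕ → α | initSeg x ℓ ∈ s} := by
  refine isOpen_compl_iff.1 <| isOpen_iff_forall_mem_open.2 fun x hx =>
    ⟨cylinder x ℓ, fun y hy hys =>
      hx (show initSeg x ℓ ∈ s from initSeg_eq_initSeg_iff.2 hy ▸ hys),
      isOpen_cylinder _ x ℓ, self_mem_cylinder x ℓ⟩

theorem exists_cylinder_subset_of_mem_nhds {x : ℕ → α} {U : Set (ℕ → α)} (hU : U ∈ nhds x) :
    ∃ n, cylinder x n ⊆ U := by
  obtain ⟨_, ⟨y, n, rfl⟩, hx, hyU⟩ := (isTopologicalBasis_cylinders _).mem_nhds_iff.1 hU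
  exact ⟨n, (mem_cylinder_iff_eq.1 hx).trans_subset hyU⟩

end InitSeg

theorem seqAdd_initSeg (x y : Cantor) (ℓ : ℕ) :
    seqAdd (initSeg x ℓ) (initSeg y ℓ) = initSeg (x + y) ℓ :=
  List.ext_getElem (by simp [seqAdd]) fun _ _ _ => by simp [seqAdd]

theorem CharTwo.add_eq_add_swap {R : Type*} [Semiring R] [CharP R 2] {a b c d : R}
    (h : a + b = c + d) : c + b = a + d :=
  calc c + b = c + b + (a + b) + (a + b) := by rw [add_assoc, add_self_eq_zero, add_zero]
    _ = c + b + (a + b) + (c + d) := by rw [h]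
    _ = a + d + (b + b) + (c + c) := by abel
    _ = a + d := by rw [add_self_eq_zero, add_self_eq_zero, add_zero, add_zero]

namespace MTK

variable {T : ℕ → Set Seq2} {ι : ℕ}

theorem ndrkGe_iff (m : MTK T ι) (α : Ordinal) :
    m.NdrkGe α ↔ ∀ β < α, ∀ ν ∈ m.u, ∃ n : MTK T ι,
      m.len < n.len ∧ m.Ext n ∧ n.NdrkGe β ∧ 2 ≤ (n.u.filter (ν <+: ·)).card := by
  rw [NdrkGe]

theorem NdrkGe.mono {m : MTK T ι} {α β : Ordinal} (h : m.NdrkGe α) (hβ : β ≤ α) :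
    m.NdrkGe β := by
  rw [ndrkGe_iff] at h ⊢
  exact fun γ hγ => h γ (hγ.trans_le hβ)

theorem ext_refl (m : MTK T ι) : m.Ext m := by
  have htake : ∀ η ∈ m.u, η.take m.len = η := fun η hη => by
    rw [← m.mem_len η hη, List.take_length]
  refine ⟨le_rfl, ?_, fun η hη ν hν hne _ i => ?_⟩
  · rw [Finset.image_congr (g := id) htake, Finset.image_id]
  · rw [htake η hη, htake ν hν, ← (m.g_mem i η hη ν hν hne).2, List.take_length]
    exact ⟨rfl, rfl⟩

theorem Ext.trans {m n p : MTK T ι} (hmn : m.Ext n) (hnp : n.Ext p) : m.Ext p := by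
  obtain ⟨hlen, hu, hg⟩ := hmn
  obtain ⟨hlen', hu', hg'⟩ := hnp
  have htake (τ : Seq2) : (τ.take n.len).take m.len = τ.take m.len := by
    rw [List.take_take, min_eq_left hlen]
  refine ⟨hlen.trans hlen', ?_, fun η hη ν hν hne hne' i => ?_⟩
  · rw [hu, hu', Finset.image_image]
    exact Finset.image_congr fun τ _ => htake τ
  have hne'' : η.take n.len ≠ ν.take n.len := fun h => hne' (by rw [← htake, h, htake])
  have e := hg' η hη ν hν hne hne'' i
  have e' := hg _ (hu' ▸ Finset.mem_image_of_mem _ hη) _ (hu' ▸ Finset.mem_image_of_mem _ hν)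
    hne'' (by rwa [htake, htake]) i
  rw [htake, htake] at e'
  rw [e'.1, e.1, e'.2, e.2, htake]
  exact ⟨rfl, rfl⟩

theorem Ext.card_filter_isPrefix_le {m n : MTK T ι} (h : m.Ext n) (ν : Seq2) :
    (m.u.filter (ν <+: ·)).card ≤ (n.u.filter (ν <+: ·)).card := by
  refine Finset.card_le_card_of_surjOn (·.take m.len) fun σ hσ => ?_
  rw [Finset.coe_filter] at hσ
  obtain ⟨τ, hτ, rfl⟩ := Finset.mem_image.1 (h.2.1 ▸ hσ.1)
  exact ⟨τ, by simpa using ⟨hτ, hσ.2.trans (List.take_prefix _ _)⟩, rfl⟩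

/-- If every splitting extension had bounded rank, the supremum `β` of the bounds (it exists
because `MTK T ι : Type` is small) would contradict `ndrk(m) ≥ β + 1`. -/
theorem exists_ext_splitting_of_forall_ndrkGe {m : MTK T ι}
    (hm : ∀ α : Ordinal.{0}, m.NdrkGe α) {ν : Seq2} (hν : ν ∈ m.u) :
    ∃ n : MTK T ι, (∀ α : Ordinal.{0}, n.NdrkGe α) ∧ m.len < n.len ∧ m.Ext n ∧
      2 ≤ (n.u.filter (ν <+: ·)).card := by
  by_contra! h
  have hbound : ∀ n : MTK T ι, m.len < n.len → m.Ext n →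
      2 ≤ (n.u.filter (ν <+: ·)).card → ∃ α : Ordinal.{0}, ¬ n.NdrkGe α := by
    intro n hlen hext hsplit
    by_contra! hn
    exact (h n hn hlen hext).not_ge hsplit
  choose! bound hbound using hbound
  obtain ⟨n, hlen, hext, hn, hsplit⟩ :=
    (ndrkGe_iff m _).1 (hm (Order.succ (⨆ n, bound n))) _ (Order.lt_succ _) ν hν
  exact hbound n hlen hext hsplit (hn.mono (Ordinal.le_iSup bound n))

theorem exists_ext_splitting_all_of_forall_ndrkGe {m : MTK T ι}
    (hm : ∀ α : Ordinal.{0}, m.NdrkGe α) :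
    ∃ n : MTK T ι, (∀ α : Ordinal.{0}, n.NdrkGe α) ∧ m.len < n.len ∧ m.Ext n ∧
      ∀ ν ∈ m.u, 2 ≤ (n.u.filter (ν <+: ·)).card := by
  suffices ∀ s ⊆ m.u, ∃ n : MTK T ι, (∀ α : Ordinal.{0}, n.NdrkGe α) ∧ m.len < n.len ∧
      m.Ext n ∧ ∀ ν ∈ s, 2 ≤ (n.u.filter (ν <+: ·)).card from this m.u subset_rfl
  intro s
  induction s using Finset.induction with
  | empty =>
    intro _
    obtain ⟨ν, hν⟩ := Finset.card_pos.1 (two_pos.trans_le m.two_le_card)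
    obtain ⟨n, hn, hlen, hext, -⟩ := exists_ext_splitting_of_forall_ndrkGe hm hν
    exact ⟨n, hn, hlen, hext, by simp⟩
  | insert a s _ ih =>
    intro hs
    obtain ⟨n, hn, hlen, hext, hsplit⟩ := ih ((Finset.subset_insert a s).trans hs)
    obtain ⟨ρ, hρ, rfl⟩ := Finset.mem_image.1 (hext.2.1 ▸ hs (Finset.mem_insert_self _ s))
    obtain ⟨p, hp, hlen', hext', hsplit'⟩ := exists_ext_splitting_of_forall_ndrkGe hn hρ
    refine ⟨p, hp, hlen.trans hlen', hext.trans hext', fun ν hν => ?_⟩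
    rcases Finset.mem_insert.1 hν with rfl | hν
    · exact hsplit'.trans <| Finset.card_le_card <|
        Finset.monotone_filter_right _ fun _ _ => (List.take_prefix _ _).trans
    · exact (hsplit ν hν).trans (hext'.card_filter_isPrefix_le ν)

structure FusionSeq (T : ℕ → Set Seq2) (ι : ℕ) where
  m : ℕ → MTK T ι
  len_lt_len_succ : ∀ j, (m j).len < (m (j + 1)).len
  ext_succ : ∀ j, (m j).Ext (m (j + 1))
  two_le_card_filter_succ : ∀ j, ∀ ν ∈ (m j).u, 2 ≤ ((m (j + 1)).u.filter (ν <+: ·)).card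

theorem exists_fusionSeq {m₀ : MTK T ι} (h₀ : ∀ α : Ordinal.{0}, m₀.NdrkGe α) :
    Nonempty (FusionSeq T ι) := by
  have : Nonempty (MTK T ι) := ⟨m₀⟩
  choose! next hfull hlen hext hsplit using
    fun m : MTK T ι => exists_ext_splitting_all_of_forall_ndrkGe (m := m)
  have hfull' : ∀ j, ∀ α, (next^[j] m₀).NdrkGe α := by
    intro j
    induction j with
    | zero => exact h₀
    | succ j ih => rw [Function.iterate_succ_apply']; exact hfull _ ih
  refine ⟨⟨fun j => next^[j] m₀, fun j => ?_, fun j => ?_, fun j => ?_⟩⟩ <;>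
    simp only [Function.iterate_succ_apply']
  exacts [hlen _ (hfull' j), hext _ (hfull' j), hsplit _ (hfull' j)]

namespace FusionSeq

variable (F : FusionSeq T ι)

theorem ext_of_le {j j' : ℕ} (h : j ≤ j') : (F.m j).Ext (F.m j') := by
  induction j', h using Nat.le_induction with
  | base => exact ext_refl _
  | succ j' _ ih => exact ih.trans (F.ext_succ j')

theorem len_mono {j j' : ℕ} (h : j ≤ j') : (F.m j).len ≤ (F.m j').len :=
  (F.ext_of_le h).1

theorem lt_len (j : ℕ) : j < (F.m j).len := by
  induction j with
  | zero => exact (F.m 0).len_pos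
  | succ j ih => exact lt_of_le_of_lt ih (F.len_lt_len_succ j)

theorem take_mem_u {j j' : ℕ} (h : j ≤ j') {σ : Seq2} (hσ : σ ∈ (F.m j').u) :
    σ.take (F.m j).len ∈ (F.m j).u :=
  (F.ext_of_le h).2.1 ▸ Finset.mem_image_of_mem _ hσ

def body : Set Cantor := {x | ∀ j, initSeg x (F.m j).len ∈ (F.m j).u}

theorem exists_mem_body_initSeg_eq {j₀ : ℕ} {σ : Seq2} (hσ : σ ∈ (F.m j₀).u) :
    ∃ x ∈ F.body, initSeg x (F.m j₀).len = σ := by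
  have hlift : ∀ j, ∀ σ ∈ (F.m j).u, ∃ ρ ∈ (F.m (j + 1)).u, ρ.take (F.m j).len = σ :=
    fun j σ hσ => Finset.mem_image.1 ((F.ext_succ j).2.1 ▸ hσ)
  choose! lift hlift_mem hlift_take using hlift
  let f : ℕ → Seq2 := fun k => Nat.rec σ (fun k τ => lift (j₀ + k) τ) k
  have hf : ∀ k, f k ∈ (F.m (j₀ + k)).u := fun k => by
    induction k with
    | zero => exact hσ
    | succ k ih => exact hlift_mem _ _ ih
  have hlen : ∀ k, (f k).length = (F.m (j₀ + k)).len := fun k => (F.m _).mem_len _ (hf k)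
  obtain ⟨x, hx⟩ := exists_initSeg_eq_of_isPrefix (f := f)
    (fun k => hlift_take _ _ (hf k) ▸ List.take_prefix _ _)
    (fun i => ⟨i, by rw [hlen]; exact (F.lt_len _).trans_le' (Nat.le_add_left i j₀)⟩)
  have hx₀ : initSeg x (F.m j₀).len = σ := hlen 0 ▸ hx 0
  refine ⟨x, fun j => ?_, hx₀⟩
  rcases le_total j₀ j with h | h
  · obtain ⟨k, rfl⟩ := Nat.exists_eq_add_of_le h
    rw [← hlen, hx]
    exact hf k
  · rw [← take_initSeg x (F.len_mono h), hx₀]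
    exact F.take_mem_u h hσ

theorem body_nonempty : F.body.Nonempty := by
  obtain ⟨σ, hσ⟩ := Finset.card_pos.1 (two_pos.trans_le (F.m 0).two_le_card)
  obtain ⟨x, hx, -⟩ := F.exists_mem_body_initSeg_eq hσ
  exact ⟨x, hx⟩

theorem isClosed_body : IsClosed F.body := by
  rw [body, Set.ofPred_forall]
  exact isClosed_iInter fun j => isClosed_setOf_initSeg_mem _ ((F.m j).u : Set Seq2)

theorem perfect_body : Perfect F.body := by
  refine ⟨F.isClosed_body, fun x hx => accPt_iff_nhds.2 fun U hU => ?_⟩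
  obtain ⟨n, hn⟩ := exists_cylinder_subset_of_mem_nhds hU
  obtain ⟨σ, hσ, hxσ, hσx⟩ : ∃ σ ∈ (F.m (n + 1)).u,
      initSeg x (F.m n).len <+: σ ∧ σ ≠ initSeg x (F.m (n + 1)).len := by
    obtain ⟨σ₁, hσ₁, σ₂, hσ₂, hne⟩ :=
      Finset.one_lt_card.1 (F.two_le_card_filter_succ n _ (hx n))
    rw [Finset.mem_filter] at hσ₁ hσ₂
    by_cases h : σ₁ = initSeg x (F.m (n + 1)).len
    · exact ⟨σ₂, hσ₂.1, hσ₂.2, fun h' => hne (h.trans h'.symm)⟩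
    · exact ⟨σ₁, hσ₁.1, hσ₁.2, h⟩
  obtain ⟨y, hy, rfl⟩ := F.exists_mem_body_initSeg_eq hσ
  refine ⟨y, ⟨hn ?_, hy⟩, fun hyx => hσx (hyx ▸ rfl)⟩
  exact cylinder_anti x (F.lt_len n).le
    (initSeg_eq_initSeg_iff.1 (initSeg_eq_of_isPrefix hxσ).symm)

theorem exists_forall_initSeg_ne {η ν : Cantor} (h : η ≠ ν) :
    ∃ j₀, ∀ j ≥ j₀, initSeg η (F.m j).len ≠ initSeg ν (F.m j).len := by
  obtain ⟨t, ht⟩ := Function.ne_iff.1 h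
  refine ⟨t, fun j hj he => ht (initSeg_eq_initSeg_iff.1 he t ?_)⟩
  exact hj.trans_lt (F.lt_len j)

def gAt (i : Fin ι) (η ν : Cantor) (j : ℕ) : Seq2 :=
  (F.m j).g i (initSeg η (F.m j).len) (initSeg ν (F.m j).len)

def hAt (i : Fin ι) (η ν : Cantor) (j : ℕ) : ℕ :=
  (F.m j).h i (initSeg η (F.m j).len) (initSeg ν (F.m j).len)

variable {F} {η ν : Cantor}

theorem hAt_eq_and_gAt_eq_take (hη : η ∈ F.body) (hν : ν ∈ F.body) {j j' : ℕ} (h : j ≤ j')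
    (hne : initSeg η (F.m j).len ≠ initSeg ν (F.m j).len) (i : Fin ι) :
    F.hAt i η ν j = F.hAt i η ν j' ∧ F.gAt i η ν j = (F.gAt i η ν j').take (F.m j).len := by
  have hne' : initSeg η (F.m j').len ≠ initSeg ν (F.m j').len := fun he =>
    hne (by rw [← take_initSeg η (F.len_mono h), he, take_initSeg ν (F.len_mono h)])
  have := (F.ext_of_le h).2.2 _ (hη j') _ (hν j') hne'
    (by rwa [take_initSeg η (F.len_mono h), take_initSeg ν (F.len_mono h)]) i
  rwa [take_initSeg η (F.len_mono h), take_initSeg ν (F.len_mono h)] at this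

theorem gAt_isPrefix_succ (hη : η ∈ F.body) (hν : ν ∈ F.body) (i : Fin ι) (j : ℕ) :
    F.gAt i η ν j <+: F.gAt i η ν (j + 1) := by
  by_cases hne : initSeg η (F.m j).len = initSeg ν (F.m j).len
  · -- before `η` and `ν` separate, `g` takes its default value `[]`
    rw [gAt, (F.m j).g_default i _ _ fun h => h.2.2 hne]
    exact List.nil_prefix
  · rw [(hAt_eq_and_gAt_eq_take hη hν j.le_succ hne i).2]
    exact List.take_prefix _ _

section Limit

variable {j₀ : ℕ} (hη : η ∈ F.body) (hν : ν ∈ F.body)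
  (hsep : ∀ j ≥ j₀, initSeg η (F.m j).len ≠ initSeg ν (F.m j).len)
include hη hν hsep

theorem gAt_length (i : Fin ι) {j : ℕ} (hj : j ≥ j₀) :
    (F.gAt i η ν j).length = (F.m j).len :=
  ((F.m j).g_mem i _ (hη j) _ (hν j) (hsep j hj)).2

theorem exists_initSeg_eq_gAt (i : Fin ι) :
    ∃ G : Cantor, ∀ j ≥ j₀, initSeg G (F.m j).len = F.gAt i η ν j := by
  obtain ⟨G, hG⟩ := exists_initSeg_eq_of_isPrefix (gAt_isPrefix_succ hη hν i) fun t =>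
    ⟨max j₀ t, by
      rw [gAt_length hη hν hsep i (le_max_left _ _)]
      exact (le_max_right _ _).trans_lt (F.lt_len _)⟩
  exact ⟨G, fun j hj => gAt_length hη hν hsep i hj ▸ hG j⟩

theorem mem_branches_of_initSeg_eq_gAt (hT : ∀ n, IsTreeNoMax (T n)) {i : Fin ι} {G : Cantor}
    (hG : ∀ j ≥ j₀, initSeg G (F.m j).len = F.gAt i η ν j) :
    G ∈ branches (T (F.hAt i η ν j₀)) := by
  intro ℓ
  set j := max j₀ ℓ
  have hℓ : ℓ ≤ (F.m j).len := (le_max_right _ _).trans (F.lt_len j).le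
  have hmem : F.gAt i η ν j ∈ T (F.hAt i η ν j) :=
    ((F.m j).g_mem i _ (hη j) _ (hν j) (hsep j (le_max_left _ _))).1
  rw [← (hAt_eq_and_gAt_eq_take hη hν (le_max_left j₀ ℓ) (hsep j₀ le_rfl) i).1] at hmem
  have := (hT _).1 _ hmem _ (List.take_prefix ℓ _)
  rwa [← hG j (le_max_left _ _), take_initSeg G hℓ] at this

theorem add_eq_add_of_initSeg_eq_gAt {i : Fin ι} {G G' : Cantor}
    (hG : ∀ j ≥ j₀, initSeg G (F.m j).len = F.gAt i η ν j)
    (hG' : ∀ j ≥ j₀, initSeg G' (F.m j).len = F.gAt i ν η j) :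
    G + η = G' + ν := by
  funext t
  set j := max j₀ t
  have h := (F.m j).add_eq i _ (hη j) _ (hν j) (hsep j (le_max_left _ _))
  rw [← gAt, ← gAt, ← hG j (le_max_left _ _), ← hG' j (le_max_left _ _),
    seqAdd_initSeg, seqAdd_initSeg, initSeg_eq_initSeg_iff] at h
  have ht := h t ((le_max_right _ _).trans_lt (F.lt_len j))
  simp only [Pi.add_apply] at ht ⊢
  rw [add_comm, ht, add_comm]

theorem injective_of_initSeg_eq_gAt {G G' : Fin ι → Cantor}
    (hG : ∀ i, initSeg (G i) (F.m j₀).len = F.gAt i η ν j₀)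
    (hG' : ∀ i, initSeg (G' i) (F.m j₀).len = F.gAt i ν η j₀) :
    Function.Injective fun p : Fin ι × Bool => if p.2 then G p.1 else G' p.1 := by
  intro p q hpq
  have hinit : ∀ r : Fin ι × Bool, initSeg (if r.2 then G r.1 else G' r.1) (F.m j₀).len =
      if r.2 then F.gAt r.1 η ν j₀ else F.gAt r.1 ν η j₀ := by
    rintro ⟨i, _ | _⟩
    exacts [hG' i, hG i]
  exact (F.m j₀).no_rep _ (hη j₀) _ (hν j₀) (hsep j₀ le_rfl) <|
    (hinit p).symm.trans ((congrArg (initSeg · _) hpq).trans (hinit q))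

end Limit

theorem two_mul_le_mk_inter_transl (hT : ∀ n, IsTreeNoMax (T n)) (hη : η ∈ F.body)
    (hν : ν ∈ F.body) (hne : η ≠ ν) :
    ((2 * ι : ℕ) : Cardinal) ≤
      #↑(transl (⋃ n, branches (T n)) η ∩ transl (⋃ n, branches (T n)) ν) := by
  obtain ⟨j₀, hsep⟩ := F.exists_forall_initSeg_ne hne
  have hsep' : ∀ j ≥ j₀, initSeg ν (F.m j).len ≠ initSeg η (F.m j).len :=
    fun j hj => (hsep j hj).symm
  choose G hG using exists_initSeg_eq_gAt hη hν hsep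
  choose G' hG' using exists_initSeg_eq_gAt hν hη hsep'
  have hGB : ∀ i, G i ∈ ⋃ n, branches (T n) := fun i =>
    Set.mem_iUnion.2 ⟨_, mem_branches_of_initSeg_eq_gAt hη hν hsep hT (hG i)⟩
  have hG'B : ∀ i, G' i ∈ ⋃ n, branches (T n) := fun i =>
    Set.mem_iUnion.2 ⟨_, mem_branches_of_initSeg_eq_gAt hν hη hsep' hT (hG' i)⟩
  have hadd : ∀ i, G i + η = G' i + ν := fun i =>
    add_eq_add_of_initSeg_eq_gAt hη hν hsep (hG i) (hG' i)
  let E : Fin ι × Bool → Cantor := fun p => (if p.2 then G p.1 else G' p.1) + η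
  have hE : ∀ p, E p ∈ transl (⋃ n, branches (T n)) η ∩ transl (⋃ n, branches (T n)) ν := by
    rintro ⟨i, _ | _⟩
    · exact ⟨⟨_, hG'B i, rfl⟩, ⟨_, hGB i, (CharTwo.add_eq_add_swap (hadd i)).symm⟩⟩
    · exact ⟨⟨_, hGB i, rfl⟩, ⟨_, hG'B i, (hadd i).symm⟩⟩
  have hinj : Function.Injective E := (add_left_injective η).comp <|
    injective_of_initSeg_eq_gAt hη hν hsep (fun i => hG i j₀ le_rfl) (fun i => hG' i j₀ le_rfl)
  calc ((2 * ι : ℕ) : Cardinal) = #(Fin ι × Bool) := by simp [mul_comm]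
    _ ≤ _ := mk_le_of_injective (hinj.codRestrict hE)

end FusionSeq

end MTK

theorem stmt_18_general (T : ℕ → Set Seq2) (ι : ℕ)
    (hT : ∀ n, IsTreeNoMax (T n))
    (hinf : ∃ m : MTK T ι, ∀ α : Ordinal.{0}, MTK.NdrkGe m α)
    (B : Set Cantor) (hB : B = ⋃ n, branches (T n)) :
    ∃ P : Set Cantor, Perfect P ∧ P.Nonempty ∧
      ∀ η ∈ P, ∀ ν ∈ P,
        ((2 * ι : ℕ) : Cardinal) ≤ Cardinal.mk ↑(transl B η ∩ transl B ν) := by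
  subst hB
  obtain ⟨m₀, h₀⟩ := hinf
  obtain ⟨F⟩ := MTK.exists_fusionSeq h₀
  refine ⟨F.body, F.perfect_body, F.body_nonempty, fun η hη ν hν => ?_⟩
  rcases ne_or_eq η ν with hne | rfl
  · exact F.two_mul_le_mk_inter_transl hT hη hν hne
  · obtain ⟨ν, ⟨-, hν⟩, hne⟩ := accPt_iff_nhds.1 (F.perfect_body.acc η hη) _ Filter.univ_mem
    rw [Set.inter_self]
    exact (F.two_mul_le_mk_inter_transl hT hη hν hne.symm).trans
      (mk_le_mk_of_subset Set.inter_subset_left)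

/-- If NDRK(T̄) = ∞, there is a perfect set P with |(B+η) ∩ (B+ν)| ≥ 2ι for all
η, ν ∈ P, where B = ⋃ₙ [Tₙ]. -/
theorem stmt_18 (T : ℕ → Set Seq2) (ι : ℕ) (hι : 2 ≤ ι)
    (hT : ∀ n, IsTreeNoMax (T n))
    (hinf : ∃ m : MTK T ι, ∀ α : Ordinal.{0}, MTK.NdrkGe m α)
    (B : Set Cantor) (hB : B = ⋃ n, branches (T n)) :
    ∃ P : Set Cantor, Perfect P ∧ P.Nonempty ∧
      ∀ η ∈ P, ∀ ν ∈ P,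
        ((2 * ι : ℕ) : Cardinal) ≤ Cardinal.mk ↑(transl B η ∩ transl B ν) :=
  stmt_18_general T ι hT hinf B hB
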